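/- arXiv:2410.14463 — 4 statements merged into one kernel-verified Lean document; each statement's English description precedes it below -/
import Mathlib

section
/- Let (V,H,G) be a hypergram. If α₁ is an n₁-qubit Pauli assignment of (V,H,G) and α₂ is an n₂-qubit Pauli assignment of (V,H,G), then α₁ and α₂ have the same contextuality degree. -/
open scoped Classical
open Matrix

noncomputable section

/-- The space of `n`-qubit operators, realized as matrices indexed by
`Fin n → Fin 2` (the `n`-fold tensor-product index). -/
abbrev QMat (n : ℕ) := Matrix (Fin n → Fin 2) (Fin n → Fin 2) ℂ

/-- The four Pauli matrices `I, X, Y, Z`. -/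
def pauliMat : Fin 4 → Matrix (Fin 2) (Fin 2) ℂ
  | ⟨0, _⟩ => 1
  | ⟨1, _⟩ => !![0, 1; 1, 0]
  | ⟨2, _⟩ => !![0, -Complex.I; Complex.I, 0]
  | ⟨3, _⟩ => !![1, 0; 0, -1]

/-- The `n`-fold Kronecker (tensor) product `G₁ ⊗ ⋯ ⊗ Gₙ` of the Pauli matrices
selected by `g : Fin n → Fin 4`, as a matrix indexed by `Fin n → Fin 2`. -/
def nPauli {n : ℕ} (g : Fin n → Fin 4) : QMat n :=
  Matrix.of fun r c => ∏ k, pauliMat (g k) (r k) (c k)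

/-- `M` is an `n`-qubit Pauli observable. -/
def IsPauliObs (n : ℕ) (M : QMat n) : Prop := ∃ g : Fin n → Fin 4, M = nPauli g

/-- `I^⊗n`, the `n`-fold tensor product of the identity. -/
def idN (n : ℕ) : QMat n := nPauli (fun _ => ⟨0, by omega⟩)

/-- Product of `f` over a finite set of naturals, taken in increasing order
(well-defined without commutativity; agrees with the unordered product when the
factors pairwise commute). -/
def natFinsetProd {M : Type*} [Monoid M] (s : Finset ℕ) (f : ℕ → M) : M :=
  ((s.sort (· ≤ ·)).map f).prod

/-- `(V,H,G)` is a hypergram: `V` a nonempty finite vertex set, `H` a set of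
nonempty hyperedges covering `V`, `G` a set of 2-element edges on `V` forming a
simple reduced graph, no edge of `G` being contained in a hyperedge of `H`. -/
def IsHypergram (V : Finset ℕ) (H G : Finset (Finset ℕ)) : Prop :=
  V.Nonempty ∧
  (∀ h ∈ H, h ⊆ V ∧ h.Nonempty) ∧
  (∀ v ∈ V, ∃ h ∈ H, v ∈ h) ∧
  (∀ e ∈ G, e ⊆ V ∧ e.card = 2) ∧
  (∀ v ∈ V, ∃ e ∈ G, v ∈ e) ∧
  (∀ v ∈ V, ∀ w ∈ V,
    (∀ u ∈ V, (({v, u} : Finset ℕ) ∈ G ↔ ({w, u} : Finset ℕ) ∈ G)) → v = w) ∧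
  (∀ e ∈ G, ∀ h ∈ H, ¬ e ⊆ h)

/-- `α` is an `n`-qubit Pauli assignment of the hypergram `(V,H,G)`. -/
def IsPauliAssignment (V : Finset ℕ) (H G : Finset (Finset ℕ)) (n : ℕ)
    (α : ℕ → QMat n) : Prop :=
  (∀ v ∈ V, IsPauliObs n (α v)) ∧
  (∀ v ∈ V, α v ≠ idN n) ∧
  (∀ v₁ ∈ V, ∀ v₂ ∈ V, α v₁ = α v₂ → v₁ = v₂) ∧
  (∀ v₁ ∈ V, ∀ v₂ ∈ V, v₁ ≠ v₂ →
    (α v₁ * α v₂ = -(α v₂ * α v₁) ↔ ({v₁, v₂} : Finset ℕ) ∈ G)) ∧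
  (∀ h ∈ H, natFinsetProd h α = idN n ∨ natFinsetProd h α = -(idN n))

/-- The sign `sgn_α(h) ∈ {−1,1}` of a hyperedge `h`: `∏_{v∈h} α(v) = sgn_α(h)·I^⊗n`. -/
def quantumSgn {n : ℕ} (α : ℕ → QMat n) (h : Finset ℕ) : ℤ :=
  if natFinsetProd h α = idN n then 1 else -1

/-- The sign `sgn_a(h) = ∏_{v∈h} a(v)` of a hyperedge for a classical assignment. -/
def classicalSgn (a : ℕ → ℤ) (h : Finset ℕ) : ℤ := ∏ v ∈ h, a v

/-- The contextuality degree of a Pauli assignment: the minimum over classical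
assignments `a : V → {−1,1}` of the number of hyperedges whose signs differ. -/
def contextualityDegree {n : ℕ} (H : Finset (Finset ℕ)) (α : ℕ → QMat n) : ℕ :=
  sInf { d : ℕ | ∃ a : ℕ → ℤ, (∀ v, a v = 1 ∨ a v = -1) ∧
    d = (H.filter (fun h => quantumSgn α h ≠ classicalSgn a h)).card }

/-- The context (incidence) matrix of a hypergram over 𝔽₂. -/
def contextMatrix (V : Finset ℕ) (H : Finset (Finset ℕ)) :
    Matrix {h // h ∈ H} {v // v ∈ V} (ZMod 2) :=
  Matrix.of fun h v => if v.1 ∈ h.1 then 1 else 0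

/-- The anticommutation (adjacency) matrix of a hypergram over 𝔽₂. -/
def anticommMatrix (V : Finset ℕ) (G : Finset (Finset ℕ)) :
    Matrix {v // v ∈ V} {v // v ∈ V} (ZMod 2) :=
  Matrix.of fun i j => if ({i.1, j.1} : Finset ℕ) ∈ G then 1 else 0

/-- The standard symplectic form on `𝔽₂^{2n}`:
`⟨x,y⟩ = Σ_{k=1}^{n} (x_{2k−1} y_{2k} + x_{2k} y_{2k−1})`. -/
def sympForm (n : ℕ) (x y : Fin (2 * n) → ZMod 2) : ZMod 2 :=
  ∑ k : Fin n,
    (x ⟨2 * k.1, by have := k.2; omega⟩ * y ⟨2 * k.1 + 1, by have := k.2; omega⟩ +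
     x ⟨2 * k.1 + 1, by have := k.2; omega⟩ * y ⟨2 * k.1, by have := k.2; omega⟩)

/-- The single-qubit encoding `ψ(I)=(0,0), ψ(X)=(0,1), ψ(Y)=(1,1), ψ(Z)=(1,0)`. -/
def psi4 : Fin 4 → (ZMod 2) × (ZMod 2)
  | ⟨0, _⟩ => (0, 0)
  | ⟨1, _⟩ => (0, 1)
  | ⟨2, _⟩ => (1, 1)
  | ⟨3, _⟩ => (1, 0)

/-- The encoding `ψ` of an `n`-qubit Pauli observable (given by its tensor
factors `g`) as a vector of `𝔽₂^{2n}`, concatenating the per-factor encodings. -/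
def psiVec {n : ℕ} (g : Fin n → Fin 4) : Fin (2 * n) → ZMod 2 := fun idx =>
  if idx.1 % 2 = 0 then (psi4 (g ⟨idx.1 / 2, by have := idx.2; omega⟩)).1
  else (psi4 (g ⟨idx.1 / 2, by have := idx.2; omega⟩)).2

/-- All pairs of elements of `S` commute. -/
def PairComm {n : ℕ} (S : Finset (QMat n)) : Prop := ∀ a ∈ S, ∀ b ∈ S, a * b = b * a

/-- The (well-defined) product of a finite set of pairwise commuting matrices. -/
def commProd {n : ℕ} (S : Finset (QMat n)) (h : PairComm S) : QMat n :=
  S.noncommProd id (fun a ha b hb _ => h a ha b hb)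

/-- Pairwise commutation is inherited by subsets. -/
def pairCommOfSubset {n : ℕ} {S T : Finset (QMat n)} (hST : S ⊆ T) (h : PairComm T) :
    PairComm S := fun a ha b hb => h a (hST ha) b (hST hb)

/-- `Q` (pairwise commuting) is independent: no nonempty subset has product `±I^⊗n`. -/
def IsIndep {n : ℕ} (Q : Finset (QMat n)) (hQ : PairComm Q) : Prop :=
  ∀ S : Finset (QMat n), ∀ (hS : S ⊆ Q), S.Nonempty →
    commProd S (pairCommOfSubset hS hQ) ≠ idN n ∧
    commProd S (pairCommOfSubset hS hQ) ≠ -(idN n)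

/-- The vertex set `{1, …, 15}`. -/
def V15 : Finset ℕ := Finset.Icc 1 15

/-- The 15 lines of the doily. -/
def doilyLines : Finset (Finset ℕ) :=
  { {1,2,3}, {1,8,9}, {1,10,11}, {2,4,6}, {2,5,7}, {3,12,15}, {3,13,14},
    {4,8,12}, {4,10,14}, {5,8,13}, {5,10,15}, {6,9,15}, {6,11,13},
    {7,9,14}, {7,11,12} }

/-- The 10 lines of the two-spread `H_{2s}`. -/
def twoSpreadLines : Finset (Finset ℕ) :=
  { {1,2,3}, {1,10,11}, {2,4,6}, {3,13,14}, {4,8,12}, {5,8,13}, {5,10,15},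
    {6,9,15}, {7,9,14}, {7,11,12} }

/-- The anticommutation graph `G_d = G_{2s}`: pairs of distinct vertices not on a
common doily line. -/
def doilyG : Finset (Finset ℕ) :=
  (V15.powersetCard 2).filter (fun e => ∀ h ∈ doilyLines, ¬ e ⊆ h)

/-!
The operators `α₁ v ⊗ α₂ v` are involutions, and they pairwise commute: two distinct vertices
either anticommute under both assignments (an edge of `G`) or commute under both. A common
eigenvector of all of them has eigenvalues `c v = ±1`, and evaluating the product over a
hyperedge `h` on it gives `sgn_α₁(h) · sgn_α₂(h) = ∏_{v ∈ h} c v`. Hence `b ↦ c · b` is a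
bijection of classical assignments carrying the hyperedges where `α₁` disagrees with `b` onto
those where `α₂` disagrees with `c · b`, so the two minima coincide.
-/

open Kronecker

namespace Matrix

variable {ι m R : Type*} [Fintype ι] [CommSemiring R]

def piKronecker (A : ι → Matrix m m R) : Matrix (ι → m) (ι → m) R :=
  of fun r c => ∏ i, A i (r i) (c i)

theorem piKronecker_mul [DecidableEq ι] [Fintype m] (A B : ι → Matrix m m R) :
    piKronecker A * piKronecker B = piKronecker (A * B) := by
  ext r c
  simp only [piKronecker, mul_apply, of_apply, Pi.mul_apply, Fintype.prod_sum]
  exact Fintype.sum_congr _ _ fun x => Finset.prod_mul_distrib.symm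

theorem piKronecker_one [DecidableEq m] : piKronecker (1 : ι → Matrix m m R) = 1 := by
  ext r c
  by_cases hrc : r = c
  · subst hrc
    simp [piKronecker]
  · obtain ⟨i, hi⟩ := Function.ne_iff.mp hrc
    simpa [piKronecker, hrc] using Finset.prod_eq_zero (Finset.mem_univ i) (by simp [hi])

theorem piKronecker_smul (c : ι → R) (A : ι → Matrix m m R) :
    piKronecker (fun i => c i • A i) = (∏ i, c i) • piKronecker A := by
  ext r s
  simp [piKronecker, Finset.prod_mul_distrib]

theorem commute_kronecker_of_anticommute {R l : Type*} [CommRing R] [Fintype l] [Fintype m]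
    {A B : Matrix l l R} {C D : Matrix m m R} (hAB : A * B = -(B * A)) (hCD : C * D = -(D * C)) :
    Commute (A ⊗ₖ C) (B ⊗ₖ D) := by
  simp only [Commute, SemiconjBy, ← mul_kronecker_mul, hAB, hCD]
  ext
  simp [kroneckerMap_apply]

theorem commute_kronecker {R l : Type*} [CommSemiring R] [Fintype l] [Fintype m]
    {A B : Matrix l l R} {C D : Matrix m m R} (hAB : Commute A B) (hCD : Commute C D) :
    Commute (A ⊗ₖ C) (B ⊗ₖ D) := by
  simp only [Commute, SemiconjBy, ← mul_kronecker_mul, hAB.eq, hCD.eq]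

end Matrix

theorem pauliMat_mul_self (i : Fin 4) : pauliMat i * pauliMat i = 1 := by
  fin_cases i <;> simp [pauliMat, Matrix.one_fin_two]

theorem pauliMat_commute_or_anticommute (i j : Fin 4) :
    pauliMat i * pauliMat j = pauliMat j * pauliMat i ∨
      pauliMat i * pauliMat j = -(pauliMat j * pauliMat i) := by
  fin_cases i <;> fin_cases j <;> simp [pauliMat, Matrix.one_fin_two, Matrix.neg_of]

theorem nPauli_eq_piKronecker {n : ℕ} (g : Fin n → Fin 4) :
    nPauli g = Matrix.piKronecker (pauliMat ∘ g) :=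
  rfl

theorem idN_eq_one (n : ℕ) : idN n = 1 :=
  Matrix.piKronecker_one

namespace IsPauliObs

variable {n : ℕ} {M N : QMat n}

theorem mul_self (hM : IsPauliObs n M) : M * M = 1 := by
  obtain ⟨g, rfl⟩ := hM
  rw [nPauli_eq_piKronecker, Matrix.piKronecker_mul]
  convert Matrix.piKronecker_one
  exact funext fun k => pauliMat_mul_self (g k)

theorem commute_or_anticommute (hM : IsPauliObs n M) (hN : IsPauliObs n N) :
    M * N = N * M ∨ M * N = -(N * M) := by
  obtain ⟨g, rfl⟩ := hM
  obtain ⟨g', rfl⟩ := hN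
  have hsign : ∀ k, ∃ ε : ℂ, ε * ε = 1 ∧
      pauliMat (g k) * pauliMat (g' k) = ε • (pauliMat (g' k) * pauliMat (g k)) := fun k => by
    rcases pauliMat_commute_or_anticommute (g k) (g' k) with h | h
    · exact ⟨1, one_mul 1, by rw [h, one_smul]⟩
    · exact ⟨-1, by norm_num, by rw [h, neg_one_smul]⟩
  choose ε hε hεg using hsign
  have hprod : nPauli g * nPauli g' = (∏ k, ε k) • (nPauli g' * nPauli g) := by
    simp only [nPauli_eq_piKronecker, Matrix.piKronecker_mul, ← Matrix.piKronecker_smul]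
    exact congrArg _ (funext hεg)
  have hprod_sq : (∏ k, ε k) * ∏ k, ε k = 1 := by
    rw [← Finset.prod_mul_distrib, Fintype.prod_eq_one _ hε]
  rcases mul_self_eq_one_iff.mp hprod_sq with h | h
  · exact Or.inl (by rw [hprod, h, one_smul])
  · exact Or.inr (by rw [hprod, h, neg_one_smul])

end IsPauliObs

theorem exists_ne_zero_forall_mulVec_eq_or_eq_neg {ι n R : Type*} [Fintype n] [DecidableEq n]
    [Nonempty n] [Ring R] [Nontrivial R] (s : Finset ι) (β : ι → Matrix n n R)
    (hcomm : ∀ i ∈ s, ∀ j ∈ s, Commute (β i) (β j)) (hinv : ∀ i ∈ s, β i * β i = 1) :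
    ∃ x : n → R, x ≠ 0 ∧ ∀ i ∈ s, β i *ᵥ x = x ∨ β i *ᵥ x = -x := by
  induction s using Finset.induction_on with
  | empty => exact ⟨1, one_ne_zero, by simp⟩
  | insert i s _ ih =>
    obtain ⟨x, hx, hxs⟩ := ih
      (fun j hj k hk => hcomm j (Finset.mem_insert_of_mem hj) k (Finset.mem_insert_of_mem hk))
      (fun j hj => hinv j (Finset.mem_insert_of_mem hj))
    -- `x + β i *ᵥ x` is fixed by the involution `β i` and still a common eigenvector of the
    -- `β j`; if it vanishes, `x` itself is a `-1`-eigenvector of `β i`.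
    by_cases hy : x + β i *ᵥ x = 0
    · refine ⟨x, hx, (Finset.forall_mem_insert _ _ _).mpr ⟨Or.inr ?_, hxs⟩⟩
      exact eq_neg_of_add_eq_zero_right hy
    · refine ⟨x + β i *ᵥ x, hy, (Finset.forall_mem_insert _ _ _).mpr ⟨Or.inl ?_, fun j hj => ?_⟩⟩
      · rw [Matrix.mulVec_add, Matrix.mulVec_mulVec, hinv i (Finset.mem_insert_self i s),
          Matrix.one_mulVec, add_comm]
      · have hji : β j * β i = β i * β j :=
          hcomm j (Finset.mem_insert_of_mem hj) i (Finset.mem_insert_self i s)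
        have hmul : β j *ᵥ (x + β i *ᵥ x) = β j *ᵥ x + β i *ᵥ (β j *ᵥ x) := by
          rw [Matrix.mulVec_add, Matrix.mulVec_mulVec, hji, ← Matrix.mulVec_mulVec]
        rcases hxs j hj with h | h
        · exact Or.inl (by rw [hmul, h])
        · exact Or.inr (by rw [hmul, h, Matrix.mulVec_neg, neg_add])

theorem List.prod_map_mulVec_of_forall_mulVec_eq_smul {ι n R : Type*} [Fintype n]
    [DecidableEq n] [CommSemiring R] (β : ι → Matrix n n R) (c : ι → R) (x : n → R)
    (l : List ι) (hl : ∀ i ∈ l, β i *ᵥ x = c i • x) : (l.map β).prod *ᵥ x = (l.map c).prod • x := by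
  induction l with
  | nil => simp
  | cons i l ih =>
    rw [List.forall_mem_cons] at hl
    simp only [List.map_cons, List.prod_cons]
    rw [← Matrix.mulVec_mulVec, ih hl.2, Matrix.mulVec_smul, hl.1, smul_smul, mul_comm]

theorem natFinsetProd_eq_prod {M : Type*} [CommMonoid M] (s : Finset ℕ) (f : ℕ → M) :
    natFinsetProd s f = ∏ v ∈ s, f v := by
  rw [natFinsetProd, Finset.prod, ← Finset.sort_eq s (· ≤ ·)]
  rfl

theorem natFinsetProd_kronecker {R l m : Type*} [CommSemiring R] [Fintype l] [Fintype m]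
    [DecidableEq l] [DecidableEq m] (s : Finset ℕ) (A : ℕ → Matrix l l R) (B : ℕ → Matrix m m R) :
    natFinsetProd s (fun v => A v ⊗ₖ B v) = natFinsetProd s A ⊗ₖ natFinsetProd s B := by
  unfold natFinsetProd
  induction s.sort (· ≤ ·) with
  | nil => simp
  | cons v l ih => simp only [List.map_cons, List.prod_cons, ih, Matrix.mul_kronecker_mul]

theorem natFinsetProd_mulVec_of_forall_mulVec_eq_smul {n R : Type*} [Fintype n] [DecidableEq n]
    [CommSemiring R] {s : Finset ℕ} (β : ℕ → Matrix n n R) (c : ℕ → R) (x : n → R)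
    (hs : ∀ v ∈ s, β v *ᵥ x = c v • x) : natFinsetProd s β *ᵥ x = (∏ v ∈ s, c v) • x := by
  rw [← natFinsetProd_eq_prod, natFinsetProd, natFinsetProd]
  exact List.prod_map_mulVec_of_forall_mulVec_eq_smul β c x _
    fun v hv => hs v ((Finset.mem_sort _).mp hv)

section Signs

variable {n : ℕ}

theorem quantumSgn_mul_self (α : ℕ → QMat n) (h : Finset ℕ) :
    quantumSgn α h * quantumSgn α h = 1 := by
  unfold quantumSgn
  split_ifs <;> norm_num

theorem natFinsetProd_eq_quantumSgn_smul {α : ℕ → QMat n} {h : Finset ℕ}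
    (hh : natFinsetProd h α = idN n ∨ natFinsetProd h α = -idN n) :
    natFinsetProd h α = ((quantumSgn α h : ℤ) : ℂ) • 1 := by
  unfold quantumSgn
  rcases hh with hh | hh <;> simp [hh, idN_eq_one]

theorem classicalSgn_mul (a b : ℕ → ℤ) (h : Finset ℕ) :
    classicalSgn (a * b) h = classicalSgn a h * classicalSgn b h :=
  Finset.prod_mul_distrib

theorem classicalSgn_ne_zero {a : ℕ → ℤ} (ha : ∀ v, a v = 1 ∨ a v = -1) (h : Finset ℕ) :
    classicalSgn a h ≠ 0 :=
  Finset.prod_ne_zero_iff.mpr fun v _ => by rcases ha v with hv | hv <;> simp [hv]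

end Signs

namespace IsPauliAssignment

variable {V : Finset ℕ} {H G : Finset (Finset ℕ)} {n₁ n₂ : ℕ} {α₁ : ℕ → QMat n₁}
  {α₂ : ℕ → QMat n₂}

theorem commute_kronecker (h₁ : IsPauliAssignment V H G n₁ α₁)
    (h₂ : IsPauliAssignment V H G n₂ α₂) {v w : ℕ} (hv : v ∈ V) (hw : w ∈ V) :
    Commute (α₁ v ⊗ₖ α₂ v) (α₁ w ⊗ₖ α₂ w) := by
  obtain ⟨hobs₁, -, -, hG₁, -⟩ := h₁
  obtain ⟨hobs₂, -, -, hG₂, -⟩ := h₂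
  by_cases hvw : v = w
  · rw [hvw]
  by_cases hedge : ({v, w} : Finset ℕ) ∈ G
  · exact Matrix.commute_kronecker_of_anticommute ((hG₁ v hv w hw hvw).mpr hedge)
      ((hG₂ v hv w hw hvw).mpr hedge)
  · exact Matrix.commute_kronecker
      (((hobs₁ v hv).commute_or_anticommute (hobs₁ w hw)).resolve_right
        (mt (hG₁ v hv w hw hvw).mp hedge))
      (((hobs₂ v hv).commute_or_anticommute (hobs₂ w hw)).resolve_right
        (mt (hG₂ v hv w hw hvw).mp hedge))

theorem kronecker_mul_self (h₁ : IsPauliAssignment V H G n₁ α₁)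
    (h₂ : IsPauliAssignment V H G n₂ α₂) {v : ℕ} (hv : v ∈ V) :
    (α₁ v ⊗ₖ α₂ v) * (α₁ v ⊗ₖ α₂ v) = 1 := by
  rw [← Matrix.mul_kronecker_mul, (h₁.1 v hv).mul_self, (h₂.1 v hv).mul_self,
    Matrix.one_kronecker_one]

theorem natFinsetProd_kronecker_eq_smul (h₁ : IsPauliAssignment V H G n₁ α₁)
    (h₂ : IsPauliAssignment V H G n₂ α₂) {h : Finset ℕ} (hh : h ∈ H) :
    natFinsetProd h (fun v => α₁ v ⊗ₖ α₂ v) =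
      ((quantumSgn α₁ h * quantumSgn α₂ h : ℤ) : ℂ) • 1 := by
  rw [natFinsetProd_kronecker, natFinsetProd_eq_quantumSgn_smul (h₁.2.2.2.2 h hh),
    natFinsetProd_eq_quantumSgn_smul (h₂.2.2.2.2 h hh), Matrix.smul_kronecker,
    Matrix.kronecker_smul, Matrix.one_kronecker_one, smul_smul, Int.cast_mul, mul_comm]

theorem exists_classicalSgn_eq_quantumSgn_mul (hHV : ∀ h ∈ H, h ⊆ V)
    (h₁ : IsPauliAssignment V H G n₁ α₁) (h₂ : IsPauliAssignment V H G n₂ α₂) :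
    ∃ c : ℕ → ℤ, (∀ v, c v = 1 ∨ c v = -1) ∧
      ∀ h ∈ H, quantumSgn α₁ h * quantumSgn α₂ h = classicalSgn c h := by
  set β : ℕ → Matrix _ _ ℂ := fun v => α₁ v ⊗ₖ α₂ v
  obtain ⟨x, hx, hxV⟩ := exists_ne_zero_forall_mulVec_eq_or_eq_neg V β
    (fun v hv w hw => h₁.commute_kronecker h₂ hv hw) (fun v hv => h₁.kronecker_mul_self h₂ hv)
  set c : ℕ → ℤ := fun v => if β v *ᵥ x = x then 1 else -1
  have hc : ∀ v ∈ V, β v *ᵥ x = ((c v : ℤ) : ℂ) • x := fun v hv => by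
    by_cases hfix : β v *ᵥ x = x
    · simp [c, hfix]
    · simp [c, (hxV v hv).resolve_left hfix]
  refine ⟨c, fun v => by by_cases hfix : β v *ᵥ x = x <;> simp [c, hfix], fun h hh => ?_⟩
  have hprod := natFinsetProd_mulVec_of_forall_mulVec_eq_smul β _ x
    fun v hv => hc v (hHV h hh hv)
  rw [h₁.natFinsetProd_kronecker_eq_smul h₂ hh, Matrix.smul_mulVec, Matrix.one_mulVec,
    ← Int.cast_prod] at hprod
  exact_mod_cast smul_left_injective ℂ hx hprod

end IsPauliAssignment

section Degree

variable {H : Finset (Finset ℕ)} {n₁ n₂ : ℕ} {α₁ : ℕ → QMat n₁} {α₂ : ℕ → QMat n₂} {c : ℕ → ℤ}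

theorem card_filter_quantumSgn_ne_classicalSgn_mul (hc : ∀ v, c v = 1 ∨ c v = -1)
    (htw : ∀ h ∈ H, quantumSgn α₁ h * quantumSgn α₂ h = classicalSgn c h) (b : ℕ → ℤ) :
    (H.filter fun h => quantumSgn α₂ h ≠ classicalSgn (c * b) h).card =
      (H.filter fun h => quantumSgn α₁ h ≠ classicalSgn b h).card := by
  congr 1
  refine Finset.filter_congr fun h hh => ?_
  have hq₂ : quantumSgn α₂ h = classicalSgn c h * quantumSgn α₁ h := by
    linear_combination quantumSgn α₁ h * htw h hh - quantumSgn α₂ h * quantumSgn_mul_self α₁ h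
  rw [hq₂, classicalSgn_mul, (mul_right_injective₀ (classicalSgn_ne_zero hc h)).ne_iff]

theorem contextualityDegree_eq_of_quantumSgn_mul_eq_classicalSgn (hc : ∀ v, c v = 1 ∨ c v = -1)
    (htw : ∀ h ∈ H, quantumSgn α₁ h * quantumSgn α₂ h = classicalSgn c h) :
    contextualityDegree H α₁ = contextualityDegree H α₂ := by
  have twist : ∀ {m₁ m₂ : ℕ} (γ₁ : ℕ → QMat m₁) (γ₂ : ℕ → QMat m₂),
      (∀ h ∈ H, quantumSgn γ₁ h * quantumSgn γ₂ h = classicalSgn c h) →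
      {d | ∃ b : ℕ → ℤ, (∀ v, b v = 1 ∨ b v = -1) ∧
        d = (H.filter fun h => quantumSgn γ₁ h ≠ classicalSgn b h).card} ⊆
      {d | ∃ b : ℕ → ℤ, (∀ v, b v = 1 ∨ b v = -1) ∧
        d = (H.filter fun h => quantumSgn γ₂ h ≠ classicalSgn b h).card} := by
    rintro m₁ m₂ γ₁ γ₂ hγ d ⟨b, hb, rfl⟩
    refine ⟨c * b, fun v => ?_, (card_filter_quantumSgn_ne_classicalSgn_mul hc hγ b).symm⟩
    rcases hc v with hcv | hcv <;> rcases hb v with hbv | hbv <;> simp [hcv, hbv]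
  exact congrArg sInf <| (twist α₁ α₂ htw).antisymm <|
    twist α₂ α₁ fun h hh => by rw [mul_comm]; exact htw h hh

end Degree

/-- All Pauli assignments of a hypergram have the same
contextuality degree. -/
theorem pauli_assignments_same_contextuality_degree
    (V : Finset ℕ) (H G : Finset (Finset ℕ)) (hgram : IsHypergram V H G)
    {n₁ n₂ : ℕ} (α₁ : ℕ → QMat n₁) (α₂ : ℕ → QMat n₂)
    (h₁ : IsPauliAssignment V H G n₁ α₁) (h₂ : IsPauliAssignment V H G n₂ α₂) :
    contextualityDegree H α₁ = contextualityDegree H α₂ := by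
  obtain ⟨c, hc, htw⟩ := h₁.exists_classicalSgn_eq_quantumSgn_mul
    (fun h hh => (hgram.2.1 h hh).1) h₂
  exact contextualityDegree_eq_of_quantumSgn_mul_eq_classicalSgn hc htw

end
end

section
/- Let A be a symmetric square matrix over 𝔽₂ with all diagonal entries equal to 0, and let i ≠ j be indices with A_{ij} = 1. Let y = A·e_i and z = A·e_j be the i-th and j-th columns of A, and let B = A + y·zᵀ + z·yᵀ. Then rank(B) = rank(A) − 2. -/
open scoped Classical
open Matrix

noncomputable section

/-- Symplectic rank-reduction step: for a symmetric zero-diagonal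
matrix `A` over 𝔽₂ with `A i j = 1` (`i ≠ j`), the update
`B = A + y zᵀ + z yᵀ` (`y`, `z` the `i`-th and `j`-th columns) drops the rank by 2. -/
theorem rank_reduction_step {ι : Type*} [Fintype ι] [DecidableEq ι]
    (A : Matrix ι ι (ZMod 2)) (hsym : A.IsSymm) (hdiag : ∀ k, A k k = 0)
    (i j : ι) (hij : i ≠ j) (hAij : A i j = 1) :
    (A + Matrix.vecMulVec (A.mulVec (Pi.single i 1)) (A.mulVec (Pi.single j 1))
       + Matrix.vecMulVec (A.mulVec (Pi.single j 1)) (A.mulVec (Pi.single i 1))).rank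
      = A.rank - 2 := by
  classical
  set u : ι → ZMod 2 := Pi.single i 1 with hu
  set v : ι → ZMod 2 := Pi.single j 1 with hv
  set y := A.mulVec u with hy
  set z := A.mulVec v with hz
  set B := A + Matrix.vecMulVec y z + Matrix.vecMulVec z y with hBdef
  have hself : ∀ w : ι → ZMod 2, w + w = 0 := by
    intro w; funext k; exact CharTwo.add_self_eq_zero _
  have hyk : ∀ k, y k = A k i := by intro k; simp [hy, hu]
  have hzk : ∀ k, z k = A k j := by intro k; simp [hz, hv]
  -- B *ᵥ x formula
  have hBmul : ∀ x, B *ᵥ x = A *ᵥ x + (z ⬝ᵥ x) • y + (y ⬝ᵥ x) • z := by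
    intro x
    rw [hBdef, add_mulVec, add_mulVec]
    congr 1
    · congr 1
      funext k
      simp [Matrix.mulVec, Matrix.vecMulVec_apply, dotProduct, Finset.mul_sum,
        mul_assoc, mul_comm, mul_left_comm]
    · funext k
      simp [Matrix.mulVec, Matrix.vecMulVec_apply, dotProduct, Finset.mul_sum,
        mul_assoc, mul_comm, mul_left_comm]
  have hzdot : ∀ x, z ⬝ᵥ x = (A *ᵥ x) j := by
    intro x
    simp only [dotProduct, Matrix.mulVec]
    exact Finset.sum_congr rfl fun m _ => by rw [hzk, hsym.apply]
  have hydot : ∀ x, y ⬝ᵥ x = (A *ᵥ x) i := by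
    intro x
    simp only [dotProduct, Matrix.mulVec]
    exact Finset.sum_congr rfl fun m _ => by rw [hyk, hsym.apply]
  have hyi : y i = 0 := by rw [hyk]; exact hdiag i
  have hyj : y j = 1 := by rw [hyk, hsym.apply]; exact hAij
  have hzi : z i = 1 := by rw [hzk]; exact hAij
  have hzj : z j = 0 := by rw [hzk]; exact hdiag j
  -- kernel equality
  have hker : LinearMap.ker B.mulVecLin
      = LinearMap.ker A.mulVecLin ⊔ Submodule.span (ZMod 2) {u, v} := by
    apply le_antisymm
    · intro x hx
      rw [LinearMap.mem_ker, Matrix.mulVecLin_apply, hBmul, hzdot, hydot] at hx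
      set c := (A *ᵥ x) j with hc
      set d := (A *ᵥ x) i with hd
      have hmem1 : x + (c • u + d • v) ∈ LinearMap.ker A.mulVecLin := by
        rw [LinearMap.mem_ker, Matrix.mulVecLin_apply, mulVec_add, mulVec_add,
          mulVec_smul, mulVec_smul, ← hy, ← hz]
        calc A *ᵥ x + (c • y + d • z) = A *ᵥ x + c • y + d • z := by ring
        _ = 0 := hx
      have hmem2 : c • u + d • v ∈ Submodule.span (ZMod 2) {u, v} :=
        Submodule.add_mem _
          (Submodule.smul_mem _ _ (Submodule.subset_span (by simp)))
          (Submodule.smul_mem _ _ (Submodule.subset_span (by simp)))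
      have hxeq : x = (x + (c • u + d • v)) + (c • u + d • v) := by
        rw [add_assoc, hself, add_zero]
      rw [hxeq]
      exact Submodule.add_mem _ (Submodule.mem_sup_left hmem1)
        (Submodule.mem_sup_right hmem2)
    · rw [sup_le_iff]
      constructor
      · intro x hx
        rw [LinearMap.mem_ker, Matrix.mulVecLin_apply] at hx ⊢
        rw [hBmul, hzdot, hydot, hx]
        simp
      · rw [Submodule.span_le]
        rintro x (rfl | rfl)
        · rw [SetLike.mem_coe, LinearMap.mem_ker, Matrix.mulVecLin_apply, hBmul]
          have h1 : z ⬝ᵥ u = 1 := by rw [hu, dotProduct_single, mul_one, hzi]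
          have h2 : y ⬝ᵥ u = 0 := by rw [hu, dotProduct_single, mul_one, hyi]
          rw [h1, h2, ← hy, one_smul, zero_smul, add_zero, hself]
        · rw [SetLike.mem_coe, LinearMap.mem_ker, Matrix.mulVecLin_apply, hBmul]
          have h1 : z ⬝ᵥ v = 0 := by rw [hv, dotProduct_single, mul_one, hzj]
          have h2 : y ⬝ᵥ v = 1 := by rw [hv, dotProduct_single, mul_one, hyj]
          rw [h1, h2, ← hz, one_smul, zero_smul, add_zero]
          exact hself z
  -- disjointness
  have hdisj : LinearMap.ker A.mulVecLin ⊓ Submodule.span (ZMod 2) {u, v} = ⊥ := by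
    rw [Submodule.eq_bot_iff]
    intro x hx
    rw [Submodule.mem_inf] at hx
    obtain ⟨hx1, hx2⟩ := hx
    rw [Submodule.mem_span_pair] at hx2
    obtain ⟨c, d, rfl⟩ := hx2
    rw [LinearMap.mem_ker, Matrix.mulVecLin_apply, mulVec_add, mulVec_smul,
      mulVec_smul, ← hy, ← hz] at hx1
    have hcj := congrFun hx1 j
    have hci := congrFun hx1 i
    simp only [Pi.add_apply, Pi.smul_apply, Pi.zero_apply, hyj, hzj, hyi, hzi,
      smul_eq_mul, mul_one, mul_zero, add_zero, zero_add] at hcj hci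
    rw [hcj, hci]; simp
  -- linear independence and finrank of span
  have hindep : LinearIndependent (ZMod 2) ![u, v] := by
    rw [LinearIndependent.pair_iff]
    intro s t hst
    have h1 := congrFun hst i
    have h2 := congrFun hst j
    simp only [Pi.add_apply, Pi.smul_apply, Pi.zero_apply, hu, hv,
      Pi.single_eq_same, Pi.single_eq_of_ne hij, Pi.single_eq_of_ne hij.symm,
      smul_eq_mul, mul_one, mul_zero, add_zero, zero_add] at h1 h2
    exact ⟨h1, h2⟩
  have hspan2 : Module.finrank (ZMod 2)
      (Submodule.span (ZMod 2) ({u, v} : Set (ι → ZMod 2))) = 2 := by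
    have h := finrank_span_eq_card hindep
    have hr : Set.range ![u, v] = {u, v} := by
      ext w
      simp [Matrix.range_cons, Matrix.range_empty, or_comm]
    rw [hr] at h
    simpa using h
  -- rank-nullity
  have hrn1 := LinearMap.finrank_range_add_finrank_ker B.mulVecLin
  have hrn2 := LinearMap.finrank_range_add_finrank_ker A.mulVecLin
  rw [Module.finrank_fintype_fun_eq_card] at hrn1 hrn2
  have hsupinf := Submodule.finrank_sup_add_finrank_inf_eq
    (LinearMap.ker A.mulVecLin) (Submodule.span (ZMod 2) {u, v})
  rw [hdisj, hspan2, finrank_bot] at hsupinf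
  have hBr : B.rank = Module.finrank (ZMod 2) (LinearMap.range B.mulVecLin) := rfl
  have hAr : A.rank = Module.finrank (ZMod 2) (LinearMap.range A.mulVecLin) := rfl
  rw [hker] at hrn1
  rw [hBr, hAr]
  omega


end
end

section
/- Let G be a symmetric V×V matrix over 𝔽₂ with all diagonal entries 0 and with rank 2n over 𝔽₂. Then there exists a family of vectors (x_v)_{v∈V} in 𝔽₂^{2n} such that ⟨x_u, x_v⟩ = G_{u,v} for all u, v ∈ V, where ⟨·,·⟩ is the standard symplectic form; i.e., G is realized as the Gram matrix of a family of vectors with respect to the standard symplectic form on 𝔽₂^{2n}. -/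
open scoped Classical
open Matrix

noncomputable section

private lemma zmod2_ne_zero {t : ZMod 2} (h : t ≠ 0) : t = 1 := by
  revert h; revert t; decide

private lemma zmod2_add_self (t : ZMod 2) : t + t = 0 := by
  revert t; decide

/-- Auxiliary: realization under the weaker hypothesis `rank ≤ 2n`. -/
private lemma gram_realization_aux :
    ∀ (n : ℕ) {ι : Type*} [Fintype ι] [DecidableEq ι]
      (G : Matrix ι ι (ZMod 2)), G.IsSymm → (∀ k, G k k = 0) →
      G.rank ≤ 2 * n →
      ∃ x : ι → (Fin (2 * n) → ZMod 2), ∀ u v, sympForm n (x u) (x v) = G u v := by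
  intro n
  induction n with
  | zero =>
    intro ι _ _ G hsym hdiag hrank
    have h0 : G.rank = 0 := Nat.le_zero.mp (by simpa using hrank)
    have hbot : LinearMap.range G.mulVecLin = ⊥ := by
      rw [Matrix.rank] at h0
      exact Submodule.finrank_eq_zero.mp h0
    have hGzero : ∀ u v, G u v = 0 := by
      intro u v
      have hmem : G.mulVec (Pi.single v 1) ∈ LinearMap.range G.mulVecLin :=
        ⟨Pi.single v 1, rfl⟩
      rw [hbot, Submodule.mem_bot] at hmem
      have := congrFun hmem u
      simpa [Matrix.mulVec_single] using this
    refine ⟨0, fun u v => ?_⟩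
    simp [sympForm, hGzero u v]
  | succ n ih =>
    intro ι _ _ G hsym hdiag hrank
    by_cases hG0 : G = 0
    · refine ⟨0, fun u v => ?_⟩
      simp [sympForm, hG0]
    · have hne : ∃ u v, G u v ≠ 0 := by
        by_contra h
        push_neg at h
        exact hG0 (by ext u v; simpa using h u v)
      obtain ⟨u, v, huv0⟩ := hne
      have huv1 : G u v = 1 := zmod2_ne_zero huv0
      have hsy : ∀ a b, G b a = G a b := fun a b => hsym.apply a b
      have hvu1 : G v u = 1 := by rw [hsy u v]; exact huv1
      set G' : Matrix ι ι (ZMod 2) :=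
        Matrix.of (fun a b => G a b + G a v * G u b + G a u * G v b) with hG'def
      have hG'ab : ∀ a b, G' a b = G a b + G a v * G u b + G a u * G v b :=
        fun a b => rfl
      have hsym' : G'.IsSymm := by
        ext a b
        simp only [Matrix.transpose_apply, hG'ab]
        rw [hsy a b, hsy v b, hsy u b, hsy a v, hsy a u]
        ring
      have hdiag' : ∀ a, G' a a = 0 := by
        intro a
        rw [hG'ab, hdiag a, hsy v a, hsy u a, zero_add,
          mul_comm (G v a) (G u a)]
        exact zmod2_add_self _
      have hrowu : ∀ b, G' u b = 0 := by
        intro b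
        rw [hG'ab, huv1, hdiag u, one_mul, zero_mul, add_zero]
        exact zmod2_add_self _
      have hrowv : ∀ b, G' v b = 0 := by
        intro b
        rw [hG'ab, hdiag v, hvu1, zero_mul, one_mul, add_zero, add_comm (G v b)]
        exact zmod2_add_self _
      set cu : ι → ZMod 2 := fun a => G a u with hcu
      set cv : ι → ZMod 2 := fun a => G a v with hcv
      have hcol : ∀ w : ι, (fun a => G a w) ∈ LinearMap.range G.mulVecLin := by
        intro w
        refine ⟨Pi.single w 1, ?_⟩
        ext a
        simp [Matrix.mulVecLin_apply, Matrix.mulVec_single]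
      have hcolG' : ∀ y : ι → ZMod 2,
          G'.mulVec y = G.mulVec y + (G.mulVec y u) • cv + (G.mulVec y v) • cu := by
        intro y
        ext a
        simp only [Matrix.mulVec, dotProduct, Pi.add_apply, Pi.smul_apply,
          smul_eq_mul, hG'ab, hcu, hcv]
        rw [Finset.sum_congr rfl (fun b _ => show
            (G a b + G a v * G u b + G a u * G v b) * y b =
            G a b * y b + G a v * (G u b * y b) + G a u * (G v b * y b) by ring)]
        rw [Finset.sum_add_distrib, Finset.sum_add_distrib, ← Finset.mul_sum,
          ← Finset.mul_sum]
        ring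
      have hWle : LinearMap.range G'.mulVecLin ≤ LinearMap.range G.mulVecLin := by
        rintro w ⟨y, rfl⟩
        rw [Matrix.mulVecLin_apply, hcolG']
        exact Submodule.add_mem _
          (Submodule.add_mem _ ⟨y, rfl⟩ (Submodule.smul_mem _ _ (hcol v)))
          (Submodule.smul_mem _ _ (hcol u))
      have hzeroat : ∀ w ∈ LinearMap.range G'.mulVecLin, w u = 0 ∧ w v = 0 := by
        rintro w ⟨y, rfl⟩
        constructor
        · simp only [Matrix.mulVecLin_apply, Matrix.mulVec, dotProduct]
          exact Finset.sum_eq_zero (fun b _ => by rw [hrowu b, zero_mul])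
        · simp only [Matrix.mulVecLin_apply, Matrix.mulVec, dotProduct]
          exact Finset.sum_eq_zero (fun b _ => by rw [hrowv b, zero_mul])
      set S : Submodule (ZMod 2) (ι → ZMod 2) := Submodule.span (ZMod 2) {cu, cv}
        with hS
      have hSle : S ≤ LinearMap.range G.mulVecLin := by
        rw [hS, Submodule.span_le]
        rintro w hw
        rcases hw with h | h
        · rw [h]; exact hcol u
        · rw [Set.mem_singleton_iff.mp h]; exact hcol v
      have hdisj : Disjoint (LinearMap.range G'.mulVecLin) S := by
        rw [Submodule.disjoint_def]
        intro w hw hwS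
        obtain ⟨s, t, hst⟩ := Submodule.mem_span_pair.mp hwS
        obtain ⟨hwu, hwv⟩ := hzeroat w hw
        have h1 : t = 0 := by
          have h := congrFun hst u
          simp only [Pi.add_apply, Pi.smul_apply, smul_eq_mul, hcu, hcv] at h
          rw [hdiag u, huv1, mul_zero, mul_one, zero_add, hwu] at h
          exact h
        have h2 : s = 0 := by
          have h := congrFun hst v
          simp only [Pi.add_apply, Pi.smul_apply, smul_eq_mul, hcu, hcv] at h
          rw [hdiag v, hvu1, mul_zero, mul_one, add_zero, hwv] at h
          exact h
        rw [← hst, h1, h2, zero_smul, zero_smul, add_zero]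
      have hli : LinearIndependent (ZMod 2) ![cu, cv] := by
        rw [LinearIndependent.pair_iff]
        intro s t hst
        have h1 : t = 0 := by
          have h := congrFun hst u
          simp only [Pi.add_apply, Pi.smul_apply, smul_eq_mul, Pi.zero_apply,
            hcu, hcv] at h
          rwa [hdiag u, huv1, mul_zero, mul_one, zero_add] at h
        have h2 : s = 0 := by
          have h := congrFun hst v
          simp only [Pi.add_apply, Pi.smul_apply, smul_eq_mul, Pi.zero_apply,
            hcu, hcv] at h
          rwa [hdiag v, hvu1, mul_zero, mul_one, add_zero] at h
        exact ⟨h2, h1⟩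
      have hfinS : Module.finrank (ZMod 2) S = 2 := by
        have hrange : Set.range ![cu, cv] = {cu, cv} := by
          simp [Matrix.range_cons, Matrix.range_empty, Set.pair_comm]
        have h := finrank_span_eq_card (R := ZMod 2) hli
        rw [hrange] at h
        rw [hS, h]
        simp
      have hranklt : G'.rank ≤ 2 * n := by
        have hsum : Module.finrank (ZMod 2)
            ((LinearMap.range G'.mulVecLin ⊔ S : Submodule (ZMod 2) (ι → ZMod 2))) =
            Module.finrank (ZMod 2) (LinearMap.range G'.mulVecLin) +
            Module.finrank (ZMod 2) S := by
          have h := Submodule.finrank_sup_add_finrank_inf_eq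
            (LinearMap.range G'.mulVecLin) S
          rw [hdisj.eq_bot] at h
          simpa using h
        have hle2 : Module.finrank (ZMod 2)
            ((LinearMap.range G'.mulVecLin ⊔ S : Submodule (ZMod 2) (ι → ZMod 2))) ≤
            G.rank := by
          rw [Matrix.rank]
          exact Submodule.finrank_mono (sup_le hWle hSle)
        rw [hsum, hfinS] at hle2
        have hfin : G'.rank + 2 ≤ 2 * (n + 1) := le_trans hle2 hrank
        omega
      obtain ⟨x', hx'⟩ := ih G' hsym' hdiag' hranklt
      set x : ι → Fin (2 * (n + 1)) → ZMod 2 := fun c idx =>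
        if h : (idx : ℕ) < 2 * n then x' c ⟨idx, h⟩
        else if (idx : ℕ) = 2 * n then G c v else G c u with hxdef
      have hlo : ∀ (c : ι) (j : Fin (2 * (n + 1))) (h : (j : ℕ) < 2 * n),
          x c j = x' c ⟨j.1, h⟩ := by
        intro c j h
        simp only [hxdef]
        rw [dif_pos h]
      have hmidv : ∀ (c : ι) (j : Fin (2 * (n + 1))), (j : ℕ) = 2 * n →
          x c j = G c v := by
        intro c j h
        simp only [hxdef]
        rw [dif_neg (by omega), if_pos h]
      have hmidu : ∀ (c : ι) (j : Fin (2 * (n + 1))), (j : ℕ) = 2 * n + 1 →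
          x c j = G c u := by
        intro c j h
        simp only [hxdef]
        rw [dif_neg (by omega), if_neg (by omega)]
      refine ⟨x, fun a b => ?_⟩
      rw [sympForm, Fin.sum_univ_castSucc]
      have hsum1 : (∑ k : Fin n,
          (x a ⟨2 * ((k.castSucc : Fin (n + 1)) : ℕ), by have := k.2; omega⟩ *
             x b ⟨2 * ((k.castSucc : Fin (n + 1)) : ℕ) + 1, by have := k.2; omega⟩ +
           x a ⟨2 * ((k.castSucc : Fin (n + 1)) : ℕ) + 1, by have := k.2; omega⟩ *
             x b ⟨2 * ((k.castSucc : Fin (n + 1)) : ℕ), by have := k.2; omega⟩)) =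
          sympForm n (x' a) (x' b) := by
        rw [sympForm]
        refine Finset.sum_congr rfl (fun k _ => ?_)
        have h1 : 2 * ((k.castSucc : Fin (n + 1)) : ℕ) < 2 * n := by
          have := k.2; simp only [Fin.coe_castSucc]; omega
        have h2 : 2 * ((k.castSucc : Fin (n + 1)) : ℕ) + 1 < 2 * n := by
          have := k.2; simp only [Fin.coe_castSucc]; omega
        rw [hlo a _ h1, hlo b _ h2, hlo a _ h2, hlo b _ h1]
        simp only [Fin.coe_castSucc]
      rw [hsum1, hx' a b]
      have hL1 : x a ⟨2 * ((Fin.last n : Fin (n + 1)) : ℕ), by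
          simp only [Fin.val_last]; omega⟩ = G a v :=
        hmidv a _ (by simp [Fin.val_last])
      have hL2 : x b ⟨2 * ((Fin.last n : Fin (n + 1)) : ℕ) + 1, by
          simp only [Fin.val_last]; omega⟩ = G b u :=
        hmidu b _ (by simp [Fin.val_last])
      have hL3 : x a ⟨2 * ((Fin.last n : Fin (n + 1)) : ℕ) + 1, by
          simp only [Fin.val_last]; omega⟩ = G a u :=
        hmidu a _ (by simp [Fin.val_last])
      have hL4 : x b ⟨2 * ((Fin.last n : Fin (n + 1)) : ℕ), by
          simp only [Fin.val_last]; omega⟩ = G b v :=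
        hmidv b _ (by simp [Fin.val_last])
      rw [hL1, hL2, hL3, hL4, hG'ab, hsy u b, hsy v b]
      have hcancel : ∀ p q r : ZMod 2, p + q + r + (q + r) = p := by decide
      exact hcancel (G a b) (G a v * G u b) (G a u * G v b)


/-- A symmetric zero-diagonal matrix of rank `2n` over 𝔽₂ is the
Gram matrix of a family of vectors of `𝔽₂^{2n}` for the standard symplectic form. -/
theorem gram_realization {ι : Type*} [Fintype ι] [DecidableEq ι] (n : ℕ)
    (G : Matrix ι ι (ZMod 2)) (hsym : G.IsSymm) (hdiag : ∀ k, G k k = 0)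
    (hrank : G.rank = 2 * n) :
    ∃ x : ι → (Fin (2 * n) → ZMod 2), ∀ u v, sympForm n (x u) (x v) = G u v := by
  exact gram_realization_aux n G hsym hdiag (le_of_eq hrank)

end
end

section
/- Let (V,H,G) be a hypergram whose context matrix times anticommutation matrix (over 𝔽₂) is zero and whose anticommutation matrix has rank 2n over 𝔽₂. Let x : V → 𝔽₂^{2n} be any family of vectors whose Gram matrix with respect to the standard symplectic form equals the anticommutation matrix, i.e., ⟨x_i, x_j⟩ = G_{i,j} for all i,j ∈ V. Then for every hyperedge h ∈ H, Σ_{v∈h} x_v = 0 in 𝔽₂^{2n}. -/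
open scoped Classical
open Matrix

noncomputable section

/-!
Summing the Gram identity `⟨x_v, x_j⟩ = A_{v,j}` over a hyperedge `h` turns `C · A = 0`
(context times anticommutation matrix) into `⟨∑_{v ∈ h} x_v, x_j⟩ = 0` for every vertex `j`.
The Gram matrix of the `x_v` factors through their span, so rank `2n` forces them to span
`𝔽₂^{2n}`; the hyperedge sum is then orthogonal to everything, hence zero because the
symplectic form is nondegenerate.
-/

section GramMatrix

variable {K M ι : Type*} [Field K] [AddCommGroup M] [Module K M]

theorem rank_gram_le_finrank_span [Fintype ι] (B : LinearMap.BilinForm K M) (x : ι → M) :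
    (Matrix.of fun i j => B (x i) (x j)).rank ≤
      Module.finrank K (Submodule.span K (Set.range x)) := by
  have hfactor : (Matrix.of fun i j => B (x i) (x j)).mulVecLin =
      (LinearMap.pi fun i => B (x i)) ∘ₗ Fintype.linearCombination K x := by
    refine LinearMap.ext fun c => funext fun i => ?_
    simp [Matrix.mulVec, dotProduct, Fintype.linearCombination_apply, mul_comm]
  have := FiniteDimensional.span_of_finite K (Set.finite_range x)
  rw [Matrix.rank, hfactor, LinearMap.range_comp, Fintype.range_linearCombination]
  exact Submodule.finrank_map_le _ _

theorem span_eq_top_of_finrank_le_rank_gram [Fintype ι] [FiniteDimensional K M]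
    (B : LinearMap.BilinForm K M) (x : ι → M)
    (hrank : Module.finrank K M ≤ (Matrix.of fun i j => B (x i) (x j)).rank) :
    Submodule.span K (Set.range x) = ⊤ :=
  Submodule.eq_top_of_finrank_eq <|
    (Submodule.finrank_le _).antisymm (hrank.trans (rank_gram_le_finrank_span B x))

theorem eq_zero_of_separatingLeft_of_span_eq_top {B : LinearMap.BilinForm K M}
    (hB : B.SeparatingLeft) {x : ι → M} (hspan : Submodule.span K (Set.range x) = ⊤) {s : M}
    (hs : ∀ i, B s (x i) = 0) : s = 0 :=
  hB s fun y => LinearMap.congr_fun (LinearMap.ext_on_range (f := B s) (g := 0) hspan hs) y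

end GramMatrix

section Symplectic

variable (n : ℕ)

def sympBilin : LinearMap.BilinForm (ZMod 2) (Fin (2 * n) → ZMod 2) :=
  LinearMap.mk₂ (ZMod 2) (sympForm n)
    (fun _ _ _ => by
      simp only [sympForm, Pi.add_apply, ← Finset.sum_add_distrib]
      exact Finset.sum_congr rfl fun _ _ => by ring)
    (fun _ _ _ => by
      simp only [sympForm, Pi.smul_apply, smul_eq_mul, Finset.mul_sum]
      exact Finset.sum_congr rfl fun _ _ => by ring)
    (fun _ _ _ => by
      simp only [sympForm, Pi.add_apply, ← Finset.sum_add_distrib]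
      exact Finset.sum_congr rfl fun _ _ => by ring)
    (fun _ _ _ => by
      simp only [sympForm, Pi.smul_apply, smul_eq_mul, Finset.mul_sum]
      exact Finset.sum_congr rfl fun _ _ => by ring)

theorem sympForm_single (s : Fin (2 * n) → ZMod 2) (k : Fin n) :
    sympForm n s (Pi.single ⟨2 * k + 1, by omega⟩ 1) = s ⟨2 * k, by omega⟩ ∧
      sympForm n s (Pi.single ⟨2 * k, by omega⟩ 1) = s ⟨2 * k + 1, by omega⟩ := by
  constructor <;>
  · rw [sympForm, Finset.sum_eq_single k]
    · simp [Fin.ext_iff]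
    · intro l _ hlk
      have : l.1 ≠ k.1 := Fin.val_ne_of_ne hlk
      simp only [Pi.single_apply, Fin.ext_iff]
      rw [if_neg (by omega), if_neg (by omega), mul_zero, mul_zero, add_zero]
    · simp

theorem sympBilin_separatingLeft : (sympBilin n).SeparatingLeft := by
  intro s hs
  funext ⟨i, hi⟩
  obtain ⟨k, rfl | rfl⟩ := Nat.even_or_odd' i
  · exact (sympForm_single n s ⟨k, by omega⟩).1.symm.trans (hs _)
  · exact (sympForm_single n s ⟨k, by omega⟩).2.symm.trans (hs _)

end Symplectic

theorem contextMatrix_mul_of_apply {V : Finset ℕ} {H : Finset (Finset ℕ)} {ι : Type*}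
    (g : ℕ → ι → ZMod 2) {h : {h // h ∈ H}} (hsub : h.1 ⊆ V) (j : ι) :
    (contextMatrix V H * Matrix.of fun (v : {v // v ∈ V}) j => g v j) h j =
      ∑ v ∈ h.1, g v j := by
  simp only [Matrix.mul_apply, contextMatrix, Matrix.of_apply, ite_mul, one_mul, zero_mul]
  rw [Finset.sum_coe_sort V fun v => if v ∈ h.1 then g v j else 0, Finset.sum_ite_mem,
    Finset.inter_eq_right.2 hsub]

/-- For a hypergram satisfying the assignability condition, any
symplectic Gram realization of the anticommutation matrix sums to zero on every
hyperedge. -/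
theorem gram_realization_sums_zero_on_hyperedges
    (V : Finset ℕ) (H G : Finset (Finset ℕ)) (hgram : IsHypergram V H G) (n : ℕ)
    (hzero : contextMatrix V H * anticommMatrix V G = 0)
    (hrank : (anticommMatrix V G).rank = 2 * n)
    (x : ℕ → Fin (2 * n) → ZMod 2)
    (hx : ∀ i (hi : i ∈ V), ∀ j (hj : j ∈ V),
      sympForm n (x i) (x j) = anticommMatrix V G ⟨i, hi⟩ ⟨j, hj⟩) :
    ∀ h ∈ H, (∑ v ∈ h, x v) = 0 := by
  intro h hH
  have hsub : h ⊆ V := (hgram.2.1 h hH).1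
  have hgramB : anticommMatrix V G =
      Matrix.of fun i j : {v // v ∈ V} => sympBilin n (x i) (x j) := by
    ext i j
    exact (hx i i.2 j j.2).symm
  have hspan : Submodule.span (ZMod 2) (Set.range fun j : {v // v ∈ V} => x j) = ⊤ :=
    span_eq_top_of_finrank_le_rank_gram (sympBilin n) _
      (by rw [← hgramB, hrank, Module.finrank_fin_fun])
  refine eq_zero_of_separatingLeft_of_span_eq_top (sympBilin_separatingLeft n) hspan fun j => ?_
  have hrow := congrFun (congrFun hzero ⟨h, hH⟩) j
  rw [hgramB, contextMatrix_mul_of_apply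
    (fun v (j : {v // v ∈ V}) => sympBilin n (x v) (x j)) hsub] at hrow
  rwa [map_sum, LinearMap.sum_apply]

end
end
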